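/- arXiv:math/0511262 — 5 statements merged into one kernel-verified Lean document; each statement's English description precedes it below -/
import Mathlib

section
/- For every k ≥ 1, the set T_k = {x ∈ ℕ : for every prime p ≤ k, the p-adic valuation of x is divisible by ⌊log_p k⌋ + 1} is k-multiplicative Sidon. -/
/-!
For a prime `p` and `1 ≤ a ≤ k` we have `p ^ ν_p(a) ≤ a ≤ k`, so `ν_p(a) < α_p = ⌊log_p k⌋ + 1`.
If `a x = b y` with `x, y ∈ T_k`, then `ν_p(a) + ν_p(x) = ν_p(b) + ν_p(y)` with `α_p ∣ ν_p(x), ν_p(y)`,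
so `ν_p(a)` and `ν_p(b)` are residues of the same class modulo `α_p`, hence equal. Thus `a = b`,
and cancelling gives `x = y`.
-/

/-- A set `S` of positive integers is `k`-multiplicative Sidon. -/
def MultSidon (k : ℕ) (S : Set ℕ) : Prop :=
  ∀ x ∈ S, ∀ y ∈ S, ∀ a b : ℕ, 1 ≤ a → a ≤ k → 1 ≤ b → b ≤ k → a * x = b * y → a = b ∧ x = y

theorem Nat.factorization_le_log_of_le {p a k : ℕ} (hp : p.Prime) (ha : a ≠ 0) (hak : a ≤ k) :
    a.factorization p ≤ Nat.log p k :=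
  Nat.le_log_of_pow_le hp.one_lt ((Nat.ordProj_le p ha).trans hak)

theorem Nat.eq_of_add_eq_add_of_dvd_of_lt {n u v s t : ℕ} (hu : u < n) (hv : v < n)
    (hs : n ∣ s) (ht : n ∣ t) (h : u + s = v + t) : u = v := by
  have hus : u ≡ u + s [MOD n] := by
    simpa using (Nat.modEq_zero_iff_dvd.2 hs).symm.add_left u
  have hvt : v ≡ v + t [MOD n] := by
    simpa using (Nat.modEq_zero_iff_dvd.2 ht).symm.add_left v
  exact (hus.trans (h ▸ hvt.symm)).eq_of_lt_of_lt hu hv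

theorem Nat.factorization_eq_of_mul_eq_mul {k a b x y p : ℕ} (hp : p.Prime)
    (ha : a ≠ 0) (hak : a ≤ k) (hb : b ≠ 0) (hbk : b ≤ k) (hx : x ≠ 0) (hy : y ≠ 0)
    (hxp : Nat.log p k + 1 ∣ x.factorization p) (hyp : Nat.log p k + 1 ∣ y.factorization p)
    (h : a * x = b * y) : a.factorization p = b.factorization p := by
  have hsum : a.factorization p + x.factorization p = b.factorization p + y.factorization p := by
    simpa [Nat.factorization_mul ha hx, Nat.factorization_mul hb hy] using
      congrArg (·.factorization p) h
  exact Nat.eq_of_add_eq_add_of_dvd_of_lt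
    (Nat.lt_succ_of_le (Nat.factorization_le_log_of_le hp ha hak))
    (Nat.lt_succ_of_le (Nat.factorization_le_log_of_le hp hb hbk)) hxp hyp hsum

/-- Primes `p > k` satisfy the defining condition of `T_k` trivially, as then `⌊log_p k⌋ = 0`. -/
theorem Nat.log_succ_dvd_factorization {k x p : ℕ}
    (hx : ∀ q : ℕ, q.Prime → q ≤ k → (Nat.log q k + 1) ∣ x.factorization q) (hp : p.Prime) :
    Nat.log p k + 1 ∣ x.factorization p := by
  by_cases hpk : p ≤ k
  · exact hx p hp hpk
  · simp [Nat.log_of_lt (Nat.lt_of_not_le hpk)]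

theorem stmt3_general (k : ℕ) :
    MultSidon k {x : ℕ | 0 < x ∧
      ∀ p : ℕ, p.Prime → p ≤ k → (Nat.log p k + 1) ∣ x.factorization p} := by
  rintro x ⟨hx, hxT⟩ y ⟨hy, hyT⟩ a b ha hak hb hbk h
  have hab : a = b := Nat.eq_of_factorization_eq (by omega) (by omega) fun p => by
    by_cases hp : p.Prime
    · exact Nat.factorization_eq_of_mul_eq_mul hp (by omega) hak (by omega) hbk hx.ne' hy.ne'
        (Nat.log_succ_dvd_factorization hxT hp) (Nat.log_succ_dvd_factorization hyT hp) h
    · simp [Nat.factorization_eq_zero_of_not_prime _ hp]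
  subst hab
  exact ⟨rfl, Nat.eq_of_mul_eq_mul_left (by omega) h⟩

theorem stmt3 (k : ℕ) (hk : 1 ≤ k) :
    MultSidon k {x : ℕ | 0 < x ∧
      ∀ p : ℕ, p.Prime → p ≤ k → (Nat.log p k + 1) ∣ x.factorization p} :=
  stmt3_general k
end

section
/- Let A_1, A_2, ... ⊆ ℕ be pairwise disjoint sets such that each δ(A_i) exists and the upper density satisfies δ̄(A_i) ≤ c·δ(A_i) for a fixed constant c ≥ 1. Then the density of A = ⋃_i A_i exists and equals Σ_i δ(A_i). -/
open Filter MeasureTheory Set ENNReal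

theorem stmt8 (A : ℕ → Set ℕ) (δ : ℕ → ℝ) (c : ℝ) (hc : 1 ≤ c)
    (hdisj : ∀ i j, i ≠ j → Disjoint (A i) (A j))
    (hdens : ∀ i, Filter.Tendsto (fun n : ℕ => ((A i ∩ Set.Icc 1 n).ncard : ℝ) / n)
      Filter.atTop (nhds (δ i)))
    (hupper : ∀ i, (⨆ n : ℕ, ((A i ∩ Set.Icc 1 n).ncard : ℝ) / n) ≤ c * δ i) :
    Filter.Tendsto (fun n : ℕ => (((⋃ i, A i) ∩ Set.Icc 1 n).ncard : ℝ) / n)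
      Filter.atTop (nhds (∑' i, δ i)) := by
  have hfin : ∀ (s : Set ℕ) (n : ℕ), (s ∩ Set.Icc 1 n).Finite :=
    fun s n => (Set.finite_Icc 1 n).inter_of_right s
  -- basic cardinality bound
  have hcard_le : ∀ (s : Set ℕ) (n : ℕ), ((s ∩ Set.Icc 1 n).ncard : ℝ) ≤ n := by
    intro s n
    have h1 : (s ∩ Set.Icc 1 n).ncard ≤ (Set.Icc 1 n).ncard :=
      Set.ncard_le_ncard Set.inter_subset_right (Set.finite_Icc 1 n)
    have h2 : (Set.Icc 1 n).ncard = n := by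
      rw [← Finset.coe_Icc, Set.ncard_coe_finset, Nat.card_Icc]; omega
    exact_mod_cast h2 ▸ h1
  -- ratio ≤ 1
  have hratio_le_one : ∀ (s : Set ℕ) (n : ℕ), ((s ∩ Set.Icc 1 n).ncard : ℝ) / n ≤ 1 := by
    intro s n
    rcases Nat.eq_zero_or_pos n with rfl | hn
    · simp
    · rw [div_le_one (by exact_mod_cast hn)]
      exact hcard_le s n
  -- each ratio ≤ c * δ i
  have hbdd : ∀ i, ∀ n : ℕ, ((A i ∩ Set.Icc 1 n).ncard : ℝ) / n ≤ c * δ i := by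
    intro i n
    have hb : BddAbove (Set.range fun m : ℕ => ((A i ∩ Set.Icc 1 m).ncard : ℝ) / m) :=
      ⟨1, by rintro x ⟨m, rfl⟩; exact hratio_le_one (A i) m⟩
    exact le_trans (le_ciSup hb n) (hupper i)
  have hratio_nonneg : ∀ (s : Set ℕ) (n : ℕ), 0 ≤ ((s ∩ Set.Icc 1 n).ncard : ℝ) / n :=
    fun s n => div_nonneg (Nat.cast_nonneg _) (Nat.cast_nonneg _)
  -- counting measure identity
  have hcnt : ∀ (s : Set ℕ), s.Finite → Measure.count s = (s.ncard : ℝ≥0∞) := by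
    intro s hs
    rw [Measure.count_apply_finite s hs, Set.ncard_eq_toFinset_card s hs]
  have hdisj' : ∀ n : ℕ, Pairwise (Function.onFun Disjoint fun i => A i ∩ Set.Icc 1 n) :=
    fun n i j hij => (hdisj i j hij).mono Set.inter_subset_left Set.inter_subset_left
  have hkey : ∀ n : ℕ, (((⋃ i, A i) ∩ Set.Icc 1 n).ncard : ℝ) =
      ∑' i, ((A i ∩ Set.Icc 1 n).ncard : ℝ) := by
    intro n
    have hmu : Measure.count ((⋃ i, A i) ∩ Set.Icc 1 n) =
        ∑' i, Measure.count (A i ∩ Set.Icc 1 n) := by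
      rw [Set.iUnion_inter]
      exact measure_iUnion (hdisj' n) fun i => (Set.finite_Icc 1 n).inter_of_right (A i)
        |>.measurableSet
    rw [hcnt _ (hfin _ n)] at hmu
    have h2 : (∑' i, Measure.count (A i ∩ Set.Icc 1 n)).toReal
        = ∑' i, ((A i ∩ Set.Icc 1 n).ncard : ℝ) := by
      rw [ENNReal.tsum_toReal_eq
        (fun i => by rw [hcnt _ (hfin (A i) n)]; exact ENNReal.natCast_ne_top _)]
      exact tsum_congr fun i => by rw [hcnt _ (hfin (A i) n)]; simp
    rw [← h2, ← hmu]
    simp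
  -- summability of cards for fixed n
  have hsum_a : ∀ n : ℕ, Summable fun i => ((A i ∩ Set.Icc 1 n).ncard : ℝ) := by
    intro n
    have hmu : ∑' i, Measure.count (A i ∩ Set.Icc 1 n) ≠ ∞ := by
      rw [← measure_iUnion (hdisj' n) (fun i => ((Set.finite_Icc 1 n).inter_of_right
        (A i)).measurableSet), ← Set.iUnion_inter, hcnt _ (hfin _ n)]
      simp
    have := ENNReal.summable_toReal hmu
    refine this.congr fun i => ?_
    rw [hcnt _ (hfin (A i) n)]; simp
  -- partial sums of δ bounded by 1, hence summable
  have hδ_sum : Summable δ := by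
    apply summable_of_sum_range_le (c := 1)
      (fun i => ge_of_tendsto' (hdens i) fun n => hratio_nonneg (A i) n)
    intro k
    have htend : Filter.Tendsto
        (fun n : ℕ => ∑ i ∈ Finset.range k, ((A i ∩ Set.Icc 1 n).ncard : ℝ) / n)
        Filter.atTop (nhds (∑ i ∈ Finset.range k, δ i)) :=
      tendsto_finset_sum _ fun i _ => hdens i
    refine le_of_tendsto htend (Filter.Eventually.of_forall fun n => ?_)
    calc ∑ i ∈ Finset.range k, ((A i ∩ Set.Icc 1 n).ncard : ℝ) / n
        = (∑ i ∈ Finset.range k, ((A i ∩ Set.Icc 1 n).ncard : ℝ)) / n := by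
          rw [Finset.sum_div]
      _ ≤ (∑' i, ((A i ∩ Set.Icc 1 n).ncard : ℝ)) / n := by
          rw [div_eq_mul_inv, div_eq_mul_inv]
          exact mul_le_mul_of_nonneg_right
            (Summable.sum_le_tsum _ (fun i _ => Nat.cast_nonneg _) (hsum_a n))
            (by positivity)
      _ = (((⋃ i, A i) ∩ Set.Icc 1 n).ncard : ℝ) / n := by rw [hkey n]
      _ ≤ 1 := hratio_le_one _ n
  -- main limit via dominated convergence for sums
  have hmain : Filter.Tendsto (fun n : ℕ => ∑' i, ((A i ∩ Set.Icc 1 n).ncard : ℝ) / n)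
      Filter.atTop (nhds (∑' i, δ i)) := by
    apply tendsto_tsum_of_dominated_convergence (bound := fun i => c * δ i)
      (hδ_sum.mul_left c) hdens
    refine Filter.Eventually.of_forall fun n i => ?_
    rw [Real.norm_of_nonneg (hratio_nonneg (A i) n)]
    exact hbdd i n
  refine hmain.congr fun n => ?_
  rw [hkey n, tsum_div_const]
end

section
/- Let 𝓕 be a forbidden family, let G_1,...,G_d be graphs each with Λ(G_i,𝓕) ≤ k, and let S = {s_1,...,s_d} be a k-multiplicative Sidon set. Then the cartesian product G_1 □ G_2 □ ... □ G_d has 𝓕-free chromatic span at most k·max(S). Specifically, if c_i is an 𝓕-free colouring of G_i with span at most k, then c(v) := Σ_i s_i·c_i(v_i) is an 𝓕-free colouring of the product with span at most k·max(S). -/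
/-- The cartesian (box) product of a finite family of graphs. -/
def BoxProd {d : ℕ} {V : Fin d → Type*} (G : ∀ i, SimpleGraph (V i)) :
    SimpleGraph (∀ i, V i) where
  Adj v w := ∃ i, (G i).Adj (v i) (w i) ∧ ∀ j, j ≠ i → v j = w j
  symm := ⟨fun v w ⟨i, h, hj⟩ => ⟨i, h.symm, fun j hji => (hj j hji).symm⟩⟩
  loopless := ⟨fun v ⟨i, h, _⟩ => (G i).loopless.irrefl _ h⟩

/-- A proper colouring with integer colours. -/
def ProperZ {V : Type*} (G : SimpleGraph V) (c : V → ℤ) : Prop :=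
  ∀ v w, G.Adj v w → c v ≠ c w

/-- `c` is an `F`-free colouring of `G`. -/
def IsFFree {V : Type*} (G : SimpleGraph V) {ι : Type*} {W : ι → Type*}
    (F : ∀ i, SimpleGraph (W i)) (c : V → ℤ) : Prop :=
  ProperZ G c ∧
    ∀ (i : ι) (f : W i → V), Function.Injective f →
      (∀ v w, (F i).Adj v w → G.Adj (f v) (f w)) →
      3 ≤ (Set.range fun w => c (f w)).ncard

/-- The colouring `c` has span at most `k`. -/
def SpanLE {V : Type*} (G : SimpleGraph V) (c : V → ℤ) (k : ℕ) : Prop :=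
  ∀ v w, G.Adj v w → |c v - c w| ≤ (k : ℤ)

/-- The `F`-free chromatic span. -/
noncomputable def LambdaF {V : Type*} (G : SimpleGraph V) {ι : Type*} {W : ι → Type*}
    (F : ∀ i, SimpleGraph (W i)) : ℕ :=
  sInf {k | ∃ c : V → ℤ, IsFFree G F c ∧ SpanLE G c k}

/-!
Along an edge of the box product only one coordinate `i` changes, so the weighted colouring
changes by `s i` times a nonzero difference of `c i` of absolute value at most `k`; this gives
properness and the span bound. If a copy of a connected member of `𝓕` received only two colours,
all its edges would carry the same absolute colour difference `a * s i`, and the Sidon property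
forces them all into one coordinate. By connectedness the copy then lives in a single fibre
`G i`, where the weighted colouring is an affine image of `c i`, which uses at least three colours.
-/

theorem SimpleGraph.Reachable.apply_eq_of_forall_adj {W β : Type*} {F : SimpleGraph W}
    {f : W → β} (hf : ∀ v w, F.Adj v w → f v = f w) {u w : W} (h : F.Reachable u w) :
    f u = f w := by
  obtain ⟨p⟩ := h
  induction p with
  | nil => rfl
  | cons hadj _ ih => exact (hf _ _ hadj).trans ih

theorem abs_sub_eq_abs_sub_of_ncard_le_two {α : Type*} [AddCommGroup α] [LinearOrder α]
    [IsOrderedAddMonoid α] {S : Set α} (hS : S.Finite) (hcard : S.ncard ≤ 2) {a b a' b' : α}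
    (ha : a ∈ S) (hb : b ∈ S) (ha' : a' ∈ S) (hb' : b' ∈ S) (hab : a ≠ b) (hab' : a' ≠ b') :
    |a - b| = |a' - b'| := by
  have hS_eq : S = {a, b} :=
    (Set.eq_of_subset_of_ncard_le (Set.insert_subset ha (Set.singleton_subset_iff.2 hb))
      (by rwa [Set.ncard_pair hab]) hS).symm
  rw [hS_eq] at ha' hb'
  rcases ha' with rfl | rfl <;> rcases hb' with rfl | rfl
  all_goals first | exact absurd rfl hab' | rfl | exact abs_sub_comm _ _

theorem ProperZ.natAbs_sub_mem_Icc {V : Type*} {G : SimpleGraph V} {c : V → ℤ} {k : ℕ}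
    (hc : ProperZ G c) (hspan : SpanLE G c k) {v w : V} (h : G.Adj v w) :
    (c v - c w).natAbs ∈ Finset.Icc 1 k := by
  rw [Finset.mem_Icc, Nat.one_le_iff_ne_zero, Int.natAbs_ne_zero, sub_ne_zero]
  have hle := hspan v w h
  rw [Int.abs_eq_natAbs] at hle
  exact ⟨hc v w h, by exact_mod_cast hle⟩

def IsMulSidon {ι : Type*} (k : ℕ) (s : ι → ℕ) : Prop :=
  ∀ (i j : ι) (a b : ℕ), 1 ≤ a → a ≤ k → 1 ≤ b → b ≤ k → a * s i = b * s j → a = b ∧ s i = s j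

section WeightedSum

variable {d k : ℕ} {V : Fin d → Type*} {G : ∀ i, SimpleGraph (V i)} (s : Fin d → ℕ)
  (c : ∀ i, V i → ℤ)

def weightedSum (v : ∀ i, V i) : ℤ := ∑ i, (s i : ℤ) * c i (v i)

variable {s c}

theorem weightedSum_sub_of_forall_ne {i : Fin d} {v w : ∀ i, V i}
    (h : ∀ l, l ≠ i → v l = w l) :
    weightedSum s c v - weightedSum s c w = s i * (c i (v i) - c i (w i)) := by
  rw [weightedSum, weightedSum, ← Finset.sum_sub_distrib,
    Finset.sum_eq_single i (fun l _ hl => by rw [h l hl, sub_self])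
      fun hi => absurd (Finset.mem_univ i) hi]
  ring

theorem properZ_weightedSum (hs : ∀ i, s i ≠ 0) (hc : ∀ i, ProperZ (G i) (c i)) :
    ProperZ (BoxProd G) (weightedSum s c) := by
  rintro v w ⟨i, hadj, hoff⟩ heq
  have h := weightedSum_sub_of_forall_ne (c := c) (s := s) hoff
  rw [heq, sub_self, eq_comm, mul_eq_zero, Nat.cast_eq_zero, sub_eq_zero] at h
  exact h.elim (hs i) ((hc i) _ _ hadj)

theorem spanLE_weightedSum (hspan : ∀ i, SpanLE (G i) (c i) k) :
    SpanLE (BoxProd G) (weightedSum s c) (k * Finset.univ.sup s) := by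
  rintro v w ⟨i, hadj, hoff⟩
  have hsi : (s i : ℤ) ≤ (Finset.univ.sup s : ℕ) := by
    exact_mod_cast Finset.le_sup (Finset.mem_univ i)
  rw [weightedSum_sub_of_forall_ne hoff, abs_mul, Nat.abs_cast]
  push_cast
  rw [mul_comm (k : ℤ)]
  exact mul_le_mul hsi (hspan i _ _ hadj) (abs_nonneg _) (by positivity)

theorem eq_of_abs_weightedSum_sub_eq (hSidon : IsMulSidon k s) (hsinj : Function.Injective s)
    (hc : ∀ i, ProperZ (G i) (c i)) (hspan : ∀ i, SpanLE (G i) (c i) k)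
    {i i' : Fin d} {v w v' w' : ∀ i, V i}
    (hadj : (G i).Adj (v i) (w i)) (hoff : ∀ l, l ≠ i → v l = w l)
    (hadj' : (G i').Adj (v' i') (w' i')) (hoff' : ∀ l, l ≠ i' → v' l = w' l)
    (heq : |weightedSum s c v - weightedSum s c w| = |weightedSum s c v' - weightedSum s c w'|) :
    i = i' := by
  rw [weightedSum_sub_of_forall_ne hoff, weightedSum_sub_of_forall_ne hoff', abs_mul, abs_mul,
    Nat.abs_cast, Nat.abs_cast, Int.abs_eq_natAbs, Int.abs_eq_natAbs] at heq
  have ha := Finset.mem_Icc.1 ((hc i).natAbs_sub_mem_Icc (hspan i) hadj)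
  have ha' := Finset.mem_Icc.1 ((hc i').natAbs_sub_mem_Icc (hspan i') hadj')
  refine hsinj (hSidon i i' _ _ ha.1 ha.2 ha'.1 ha'.2 ?_).2
  rw [mul_comm, mul_comm _ (s i')]
  exact_mod_cast heq

theorem three_le_ncard_range_weightedSum_of_forall_ne {ι : Type*} {W : ι → Type*}
    {F : ∀ j, SimpleGraph (W j)} (hs : ∀ i, s i ≠ 0) (hc : ∀ i, IsFFree (G i) F (c i))
    {j : ι} {i : Fin d} {f : W j → ∀ i, V i} (hf : Function.Injective f)
    (hadj : ∀ v w, (F j).Adj v w → (G i).Adj (f v i) (f w i))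
    (w₀ : W j) (hconst : ∀ w l, l ≠ i → f w l = f w₀ l) :
    3 ≤ (Set.range fun w => weightedSum s c (f w)).ncard := by
  set φ : ℤ → ℤ := fun x => s i * x + (weightedSum s c (f w₀) - s i * c i (f w₀ i))
  have hφ : Function.Injective φ := fun x y hxy =>
    mul_left_cancel₀ (Nat.cast_ne_zero.2 (hs i)) (add_right_cancel hxy)
  have hrange : (Set.range fun w => weightedSum s c (f w)) =
      φ '' Set.range fun w => c i (f w i) := by
    rw [← Set.range_comp]
    refine congrArg Set.range (funext fun w => ?_)
    have := weightedSum_sub_of_forall_ne (s := s) (c := c) (hconst w)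
    simp only [Function.comp_apply, φ]
    linarith
  have hproj : Function.Injective fun w => f w i := fun a b hab => hf <| funext fun l => by
    by_cases hl : l = i
    · subst hl; exact hab
    · rw [hconst a l hl, hconst b l hl]
  rw [hrange, Set.ncard_image_of_injective _ hφ]
  exact (hc i).2 j _ hproj hadj

theorem isFFree_weightedSum {ι : Type*} {W : ι → Type*} [∀ j, Fintype (W j)]
    {F : ∀ j, SimpleGraph (W j)} (hconn : ∀ j, (F j).Connected)
    (hthree : ∀ j, 3 ≤ Fintype.card (W j)) (hc : ∀ i, IsFFree (G i) F (c i))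
    (hspan : ∀ i, SpanLE (G i) (c i) k) (hs : ∀ i, s i ≠ 0) (hsinj : Function.Injective s)
    (hSidon : IsMulSidon k s) :
    IsFFree (BoxProd G) F (weightedSum s c) := by
  have hproper := properZ_weightedSum hs fun i => (hc i).1
  refine ⟨hproper, fun j f hf hhom => ?_⟩
  by_contra! htwo
  have : Nontrivial (W j) := Fintype.one_lt_card_iff_nontrivial.1 (by linarith [hthree j])
  obtain ⟨w₀⟩ := (inferInstance : Nonempty (W j))
  obtain ⟨x₀, h₀⟩ := (hconn j).preconnected.exists_adj_of_nontrivial w₀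
  obtain ⟨i, hadj₀, hoff₀⟩ := hhom _ _ h₀
  -- a two-coloured copy has one colour gap, which the Sidon property ties to one coordinate
  have hcoord : ∀ v w, (F j).Adj v w →
      (G i).Adj (f v i) (f w i) ∧ ∀ l, l ≠ i → f v l = f w l := by
    intro v w h
    obtain ⟨i', hadj, hoff⟩ := hhom v w h
    obtain rfl : i' = i := eq_of_abs_weightedSum_sub_eq hSidon hsinj (fun i => (hc i).1) hspan
      hadj hoff hadj₀ hoff₀ <| abs_sub_eq_abs_sub_of_ncard_le_two (Set.finite_range _)
        (Nat.le_of_lt_succ htwo) ⟨v, rfl⟩ ⟨w, rfl⟩ ⟨w₀, rfl⟩ ⟨x₀, rfl⟩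
        (hproper _ _ (hhom _ _ h)) (hproper _ _ (hhom _ _ h₀))
    exact ⟨hadj, hoff⟩
  have hconst : ∀ w l, l ≠ i → f w l = f w₀ l := fun w l hl =>
    ((hconn j).preconnected w w₀).apply_eq_of_forall_adj (f := fun w => f w l)
      fun v w h => (hcoord v w h).2 l hl
  exact (three_le_ncard_range_weightedSum_of_forall_ne hs hc hf
    (fun v w h => (hcoord v w h).1) w₀ hconst).not_gt htwo

end WeightedSum

theorem stmt11_general {d k : ℕ} {V : Fin d → Type*} (G : ∀ i, SimpleGraph (V i))
    {ι : Type*} {W : ι → Type*} [∀ i, Fintype (W i)] (F : ∀ i, SimpleGraph (W i))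
    (hconn : ∀ i, (F i).Connected)
    (hthree : ∀ i, 3 ≤ Fintype.card (W i))
    (c : ∀ i, V i → ℤ) (hc : ∀ i, IsFFree (G i) F (c i))
    (hspan : ∀ i, SpanLE (G i) (c i) k)
    (s : Fin d → ℕ) (hs1 : ∀ i, 1 ≤ s i) (hsinj : Function.Injective s)
    (hSidon : ∀ (i j : Fin d) (a b : ℕ), 1 ≤ a → a ≤ k → 1 ≤ b → b ≤ k →
      a * s i = b * s j → a = b ∧ s i = s j) :
    IsFFree (BoxProd G) F (fun v => ∑ i, (s i : ℤ) * c i (v i)) ∧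
    SpanLE (BoxProd G) (fun v => ∑ i, (s i : ℤ) * c i (v i)) (k * Finset.univ.sup s) ∧
    LambdaF (BoxProd G) F ≤ k * Finset.univ.sup s := by
  have hfree : IsFFree (BoxProd G) F (weightedSum s c) :=
    isFFree_weightedSum hconn hthree hc hspan (fun i => Nat.one_le_iff_ne_zero.1 (hs1 i))
      hsinj hSidon
  have hspan' : SpanLE (BoxProd G) (weightedSum s c) (k * Finset.univ.sup s) :=
    spanLE_weightedSum hspan
  exact ⟨hfree, hspan', Nat.sInf_le ⟨_, hfree, hspan'⟩⟩

theorem stmt11 {d k : ℕ} {V : Fin d → Type*} (G : ∀ i, SimpleGraph (V i))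
    {ι : Type*} {W : ι → Type*} [∀ i, Fintype (W i)] (F : ∀ i, SimpleGraph (W i))
    (hconn : ∀ i, (F i).Connected)
    (hbip : ∀ i, ∃ b : W i → Bool, ∀ v w, (F i).Adj v w → b v ≠ b w)
    (hthree : ∀ i, 3 ≤ Fintype.card (W i))
    (c : ∀ i, V i → ℤ) (hc : ∀ i, IsFFree (G i) F (c i))
    (hspan : ∀ i, SpanLE (G i) (c i) k)
    (s : Fin d → ℕ) (hs1 : ∀ i, 1 ≤ s i) (hsinj : Function.Injective s)
    (hSidon : ∀ (i j : Fin d) (a b : ℕ), 1 ≤ a → a ≤ k → 1 ≤ b → b ≤ k →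
      a * s i = b * s j → a = b ∧ s i = s j) :
    IsFFree (BoxProd G) F (fun v => ∑ i, (s i : ℤ) * c i (v i)) ∧
    SpanLE (BoxProd G) (fun v => ∑ i, (s i : ℤ) * c i (v i)) (k * Finset.univ.sup s) ∧
    LambdaF (BoxProd G) F ≤ k * Finset.univ.sup s :=
  stmt11_general G F hconn hthree c hc hspan s hs1 hsinj hSidon
end

section
/- Fix n, k ≥ 1 and let G_{n,k} be the graph on vertex set {1,...,n} with x ~ y whenever x ≠ y and a·x = b·y for some a, b ∈ {1,...,k}. The connected components of G_{n,k} are exactly the sets X_{n,k,s} = {x ∈ {1,...,n} : β_*(x) = s} for s ∈ S_k ∩ {1,...,n}, where β_*(x) is the largest divisor of x coprime to all primes ≤ k and S_k = {s : gcd(s, P_k) = 1}. -/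
/-!
Multiplying by some `a ≤ k` only changes the exponents of primes `≤ k`, so `betaStar k` is
constant along edges and hence on components. Conversely, while `x` still has a prime factor
`p ≤ k`, the vertex `x` is adjacent to the smaller vertex `x / p` (take `1 * x = p * (x / p)`),
and `x / p` has the same `betaStar`; descending in this way joins `x` to `betaStar k x`.
-/

/-- `betaStar k x` is the largest divisor of `x` coprime to all primes `≤ k`. -/
def betaStar (k x : ℕ) : ℕ :=
  ∏ p ∈ x.primeFactors.filter (fun p => k < p), p ^ x.factorization p

/-- The product of all primes at most `k`. -/
def primesProduct (k : ℕ) : ℕ := ∏ p ∈ Finset.filter Nat.Prime (Finset.range (k + 1)), p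

/-- The graph on `{1, …, n}` where `x ~ y` iff `x ≠ y` and `a*x = b*y`
for some `a, b ∈ {1, …, k}`. -/
def GMult (n k : ℕ) : SimpleGraph ℕ where
  Adj x y := x ≠ y ∧ x ∈ Finset.Icc 1 n ∧ y ∈ Finset.Icc 1 n ∧
    ∃ a b : ℕ, 1 ≤ a ∧ a ≤ k ∧ 1 ≤ b ∧ b ≤ k ∧ a * x = b * y
  symm := ⟨fun _ _ ⟨hxy, hx, hy, a, b, ha1, hak, hb1, hbk, hab⟩ =>
    ⟨hxy.symm, hy, hx, b, a, hb1, hbk, ha1, hak, hab.symm⟩⟩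
  loopless := ⟨fun _ ⟨hxx, _⟩ => hxx rfl⟩

theorem SimpleGraph.Reachable.apply_eq_of_adj {V β : Type*} {G : SimpleGraph V} {f : V → β}
    (hf : ∀ x y, G.Adj x y → f x = f y) {x y : V} (h : G.Reachable x y) : f x = f y := by
  rw [reachable_iff_reflTransGen] at h
  induction h with
  | refl => rfl
  | tail _ hadj ih => exact ih.trans (hf _ _ hadj)

section betaStar

variable {k x : ℕ}

lemma betaStar_dvd (k x : ℕ) : betaStar k x ∣ x := by
  rcases eq_or_ne x 0 with rfl | hx
  · exact dvd_zero _
  · conv_rhs => rw [Nat.prod_primeFactors_pow_factorization hx]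
    exact Finset.prod_dvd_prod_of_subset _ _ _ (Finset.filter_subset _ _)

lemma betaStar_coprime_primesProduct (k x : ℕ) :
    Nat.Coprime (betaStar k x) (primesProduct k) := by
  refine Nat.Coprime.prod_left fun p hp => Nat.Coprime.prod_right fun q hq => ?_
  obtain ⟨hpx, hkp⟩ := Finset.mem_filter.mp hp
  obtain ⟨hqk, hq⟩ := Finset.mem_filter.mp hq
  rw [Finset.mem_range] at hqk
  exact Nat.Coprime.pow_left _ <|
    (Nat.coprime_primes (Nat.prime_of_mem_primeFactors hpx) hq).mpr (by omega)

lemma betaStar_mem_Icc {n : ℕ} (hx : x ∈ Finset.Icc 1 n) : betaStar k x ∈ Finset.Icc 1 n := by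
  obtain ⟨hx1, hxn⟩ := Finset.mem_Icc.mp hx
  have hdvd := betaStar_dvd k x
  exact Finset.mem_Icc.mpr ⟨Nat.pos_of_dvd_of_pos hdvd hx1, (Nat.le_of_dvd hx1 hdvd).trans hxn⟩

lemma betaStar_eq_self (hx : x ≠ 0) (h : ∀ p ∈ x.primeFactors, k < p) : betaStar k x = x := by
  rw [betaStar, Finset.filter_true_of_mem h, ← Nat.prod_primeFactors_pow_factorization hx]

lemma betaStar_congr {y : ℕ}
    (h : ∀ p, k < p → x.factorization p = y.factorization p) :
    betaStar k x = betaStar k y := by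
  have hsupport : x.primeFactors.filter (k < ·) = y.primeFactors.filter (k < ·) := by
    ext p
    simp only [Finset.mem_filter, ← Nat.support_factorization, Finsupp.mem_support_iff]
    exact ⟨fun ⟨hp, hkp⟩ => ⟨h p hkp ▸ hp, hkp⟩, fun ⟨hp, hkp⟩ => ⟨(h p hkp).symm ▸ hp, hkp⟩⟩
  rw [betaStar, betaStar, hsupport]
  exact Finset.prod_congr rfl fun p hp => by rw [h p (Finset.mem_filter.mp hp).2]

lemma betaStar_mul_of_le {a : ℕ} (ha : a ≠ 0) (hx : x ≠ 0) (hak : a ≤ k) :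
    betaStar k (a * x) = betaStar k x := by
  refine betaStar_congr fun p hkp => ?_
  rw [Nat.factorization_mul ha hx, Finsupp.add_apply,
    Nat.factorization_eq_zero_of_lt (hak.trans_lt hkp), zero_add]

end betaStar

namespace GMult

variable {n k x y : ℕ}

lemma betaStar_eq_of_adj (h : (GMult n k).Adj x y) : betaStar k x = betaStar k y := by
  obtain ⟨-, hx, hy, a, b, ha, hak, hb, hbk, hab⟩ := h
  have hx0 := Nat.one_le_iff_ne_zero.mp (Finset.mem_Icc.mp hx).1
  have hy0 := Nat.one_le_iff_ne_zero.mp (Finset.mem_Icc.mp hy).1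
  rw [← betaStar_mul_of_le (by omega) hx0 hak, hab, betaStar_mul_of_le (by omega) hy0 hbk]

lemma adj_div_prime {p : ℕ} (hx : x ∈ Finset.Icc 1 n) (hp : p.Prime) (hpx : p ∣ x)
    (hpk : p ≤ k) : (GMult n k).Adj x (x / p) := by
  obtain ⟨hx1, hxn⟩ := Finset.mem_Icc.mp hx
  have hlt : x / p < x := Nat.div_lt_self hx1 hp.one_lt
  have hpos : 0 < x / p := Nat.div_pos (Nat.le_of_dvd hx1 hpx) hp.pos
  exact ⟨hlt.ne', hx, Finset.mem_Icc.mpr ⟨hpos, by omega⟩, 1, p, le_rfl, hp.one_lt.le.trans hpk,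
    hp.one_lt.le, hpk, by rw [one_mul, Nat.mul_div_cancel' hpx]⟩

lemma reachable_betaStar (hx : x ∈ Finset.Icc 1 n) : (GMult n k).Reachable x (betaStar k x) := by
  induction x using Nat.strong_induction_on with
  | _ x ih =>
    have hx0 := Nat.one_le_iff_ne_zero.mp (Finset.mem_Icc.mp hx).1
    by_cases hrough : ∀ p ∈ x.primeFactors, k < p
    · rw [betaStar_eq_self hx0 hrough]
    push Not at hrough
    obtain ⟨p, hpmem, hpk⟩ := hrough
    have hp := Nat.prime_of_mem_primeFactors hpmem
    have hpx := Nat.dvd_of_mem_primeFactors hpmem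
    have hadj := adj_div_prime hx hp hpx hpk
    have hxp : x / p ∈ Finset.Icc 1 n := hadj.2.2.1
    have hsame : betaStar k x = betaStar k (x / p) := by
      conv_lhs => rw [← Nat.mul_div_cancel' hpx]
      exact betaStar_mul_of_le hp.ne_zero (Nat.one_le_iff_ne_zero.mp (Finset.mem_Icc.mp hxp).1) hpk
    rw [hsame]
    exact hadj.reachable.trans (ih _ (Nat.div_lt_self hx0.bot_lt hp.one_lt) hxp)

lemma reachable_iff_betaStar_eq (hx : x ∈ Finset.Icc 1 n) (hy : y ∈ Finset.Icc 1 n) :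
    (GMult n k).Reachable x y ↔ betaStar k x = betaStar k y := by
  refine ⟨SimpleGraph.Reachable.apply_eq_of_adj fun _ _ => betaStar_eq_of_adj, fun h => ?_⟩
  have hy' := reachable_betaStar (k := k) hy
  rw [← h] at hy'
  exact (reachable_betaStar hx).trans hy'.symm

end GMult

theorem stmt15_general (n k : ℕ) :
    (∀ x ∈ Finset.Icc 1 n, betaStar k x ∈ Finset.Icc 1 n ∧
        Nat.gcd (betaStar k x) (primesProduct k) = 1) ∧
    ∀ x ∈ Finset.Icc 1 n, ∀ y ∈ Finset.Icc 1 n,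
      ((GMult n k).Reachable x y ↔ betaStar k x = betaStar k y) :=
  ⟨fun x hx => ⟨betaStar_mem_Icc hx, betaStar_coprime_primesProduct k x⟩,
    fun _ hx _ hy => GMult.reachable_iff_betaStar_eq hx hy⟩

theorem stmt15 (n k : ℕ) (hk : 1 ≤ k) :
    (∀ x ∈ Finset.Icc 1 n, betaStar k x ∈ Finset.Icc 1 n ∧
        Nat.gcd (betaStar k x) (primesProduct k) = 1) ∧
    ∀ x ∈ Finset.Icc 1 n, ∀ y ∈ Finset.Icc 1 n,
      ((GMult n k).Reachable x y ↔ betaStar k x = betaStar k y) :=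
  stmt15_general n k
end

section
/- Every integer x > √k with k ≥ 1 that has all prime factors at most k admits a divisor q with √k ≤ q ≤ k. -/
theorem stmt18 (k x : ℕ) (hk : 1 ≤ k) (hx : Real.sqrt k < x)
    (hsmooth : ∀ p : ℕ, p.Prime → p ∣ x → p ≤ k) :
    ∃ q : ℕ, q ∣ x ∧ Real.sqrt k ≤ q ∧ q ≤ k := by
  classical
  have hk0 : (0:ℝ) ≤ (k:ℝ) := by positivity
  have hksq : Real.sqrt k * Real.sqrt k = (k:ℝ) := Real.mul_self_sqrt hk0
  have hk1 : (1:ℝ) ≤ Real.sqrt k := by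
    have h1 : (1:ℝ) ≤ (k:ℝ) := by exact_mod_cast hk
    nlinarith [Real.sqrt_nonneg (k:ℝ)]
  have hex : ∃ d : ℕ, d ∣ x ∧ Real.sqrt k ≤ d := ⟨x, dvd_rfl, hx.le⟩
  set q := Nat.find hex with hqdef
  obtain ⟨hqdvd, hqge⟩ : q ∣ x ∧ Real.sqrt k ≤ q := Nat.find_spec hex
  have hmin : ∀ d : ℕ, d < q → ¬ (d ∣ x ∧ Real.sqrt k ≤ d) :=
    fun d hd => Nat.find_min hex hd
  have hq1 : 1 ≤ q := by
    rcases Nat.eq_zero_or_pos q with h | h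
    · exfalso; rw [h] at hqge; push_cast at hqge; linarith
    · exact h
  rcases eq_or_lt_of_le hq1 with h1 | h2
  · -- q = 1, so √k ≤ 1 and 1 ≤ k
    refine ⟨1, one_dvd _, ?_, hk⟩
    rw [← h1] at hqge; exact_mod_cast hqge
  · -- q ≥ 2
    obtain ⟨p, hp, hpq⟩ := Nat.exists_prime_and_dvd (show q ≠ 1 by omega)
    have hpx : p ∣ x := hpq.trans hqdvd
    have hpk : p ≤ k := hsmooth p hp hpx
    by_cases hps : Real.sqrt k ≤ p
    · exact ⟨p, hpx, hps, hpk⟩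
    · push_neg at hps
      obtain ⟨d, hd⟩ := hpq
      have hdq : d ∣ q := ⟨p, by rw [hd, mul_comm]⟩
      have hdx : d ∣ x := hdq.trans hqdvd
      have hdlt : d < q := by
        have hp2 := hp.two_le
        have hd0 : 0 < d := by
          rcases Nat.eq_zero_or_pos d with h | h
          · exfalso; rw [h, mul_zero] at hd; omega
          · exact h
        calc d = 1 * d := (one_mul d).symm
        _ < p * d := by exact (Nat.mul_lt_mul_right hd0).mpr (by omega)
        _ = q := hd.symm
      have hds : (d:ℝ) < Real.sqrt k := by
        by_contra hcon
        push_neg at hcon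
        exact hmin d hdlt ⟨hdx, hcon⟩
      have hqk : (q:ℝ) < (k:ℝ) := by
        have : (q:ℝ) = (p:ℝ) * d := by rw [hd]; push_cast; ring
        have hd0 : (0:ℝ) ≤ d := by positivity
        have hp0 : (0:ℝ) < p := by exact_mod_cast hp.pos
        nlinarith
      exact ⟨q, hqdvd, hqge, le_of_lt (by exact_mod_cast hqk)⟩
end
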